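/- (Point correspondence.) For every x ∈ E = span{e₁, e₂, e₃}, the image under ♯ of the PGA point equals the CGA dual (IPNS) representation of the corresponding flat point: ♯(P(x)) = (ι(v_x) ∧ e∞) I_c⁻¹, where P(x) := I_E + ι(x)^{*_E} ι(e₀) and v_x := e₀ + x + ½Q(x)e∞. -/

import Mathlib

open CliffordAlgebra

/-- The matrix of the CGA inner product on `V = ℝ⁵`; indices `0, 1, 2, 3, 4`
correspond to the basis `e₀, e₁, e₂, e₃, e∞`. -/
def Bmat : Matrix (Fin 5) (Fin 5) ℝ :=
  !![0, 0, 0, 0, -1;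
     0, 1, 0, 0, 0;
     0, 0, 1, 0, 0;
     0, 0, 0, 1, 0;
     -1, 0, 0, 0, 0]

/-- The CGA quadratic form
`Q(a e₀ + x₁e₁ + x₂e₂ + x₃e₃ + b e∞) = x₁² + x₂² + x₃² − 2ab`. -/
noncomputable def Q : QuadraticForm ℝ (Fin 5 → ℝ) := Bmat.toQuadraticMap'

/-- The basis vectors of `V = ℝ⁵`: `e 0 = e₀`, `e 1, e 2, e 3` Euclidean, `e 4 = e∞`. -/
def e (i : Fin 5) : Fin 5 → ℝ := Pi.single i 1

/-- The linear map `♯ : V → V` fixing `e₁, e₂, e₃` and sending `e₀ ↦ -e∞`, `e∞ ↦ -e₀`. -/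
def sharpV : (Fin 5 → ℝ) →ₗ[ℝ] (Fin 5 → ℝ) where
  toFun v i := if i = 0 then -(v 4) else if i = 4 then -(v 0) else v i
  map_add' u v := by
    funext i
    by_cases h : i = 0 <;> by_cases h' : i = 4 <;> simp [h, h'] <;> ring
  map_smul' c v := by
    funext i
    by_cases h : i = 0 <;> by_cases h' : i = 4 <;> simp [h, h'] <;> ring

/-- Outer (wedge) product of a multivector with a vector:
`A ∧ v := ½ (A ι(v) + ι(v) α(A))`, where `α` is the grade involution. -/
noncomputable def wedgeVec (A : CliffordAlgebra Q) (v : Fin 5 → ℝ) : CliffordAlgebra Q :=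
  (1 / 2 : ℝ) • (A * ι Q v + ι Q v * involute A)

/-- The conformal pseudoscalar `I_c = (((e₀ ∧ e₁) ∧ e₂) ∧ e₃) ∧ e∞`. -/
noncomputable def Ic : CliffordAlgebra Q :=
  wedgeVec (wedgeVec (wedgeVec (wedgeVec (ι Q (e 0)) (e 1)) (e 2)) (e 3)) (e 4)

/-- The Euclidean pseudoscalar `I_E = ι(e₁) ι(e₂) ι(e₃)`. -/
noncomputable def IE : CliffordAlgebra Q := ι Q (e 1) * ι Q (e 2) * ι Q (e 3)

/-- The Euclidean dual `X^{*_E} := X I_E⁻¹ = -X I_E`. -/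
noncomputable def dualE (X : CliffordAlgebra Q) : CliffordAlgebra Q := -(X * IE)

/-- The PGA representation of the Euclidean point `x`: `P(x) = I_E + x^{*_E} e₀`. -/
noncomputable def Ppt (x : Fin 5 → ℝ) : CliffordAlgebra Q :=
  IE + dualE (ι Q x) * ι Q (e 0)

/-- The conformal embedding `v_x = e₀ + x + ½ Q(x) e∞` of a Euclidean point `x`. -/
noncomputable def vpt (x : Fin 5 → ℝ) : Fin 5 → ℝ :=
  e 0 + x + (Q x / 2) • e 4

/-!
Write `E = e₀e∞` and `N = 1 + E`. A direct computation gives `♯P(x) = I_E + x I_E e∞`,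
`v_x ∧ e∞ = N + x e∞` and `-I_c = I_E N`. Because `e∞` is null and `B(e₀, e∞) = -1`, `N` is an
involution with `e∞ N = -e∞`; moreover `e₀` and `e∞` anticommute with `I_E`, so `N` commutes
with it. Hence `(N + x e∞) I_E N = I_E N² - x I_E (e∞ N) = I_E + x I_E e∞`.
-/

open QuadraticMap

section NullPair

variable {R M : Type*} [CommRing R] [AddCommGroup M] [Module R M] {q : QuadraticForm R M}

theorem ι_mul_involute_ι {u v : M} (h : q.IsOrtho u v) :
    ι q v * involute (ι q u) = ι q u * ι q v := by
  rw [involute_ι, mul_neg, ι_mul_ι_comm_of_isOrtho h.symm, neg_neg]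

theorem ι_mul_involute_mul_ι {A : CliffordAlgebra q} {u v : M}
    (hA : ι q v * involute A = A * ι q v) (h : q.IsOrtho u v) :
    ι q v * involute (A * ι q u) = A * ι q u * ι q v := by
  rw [map_mul, ← mul_assoc, hA, mul_assoc, ι_mul_involute_ι h, mul_assoc]

variable {n₀ n₁ : M} (hpolar : polar q n₀ n₁ = -2)
include hpolar

theorem ι_mul_ι_swap_of_polar_eq_neg_two : ι q n₁ * ι q n₀ = -2 - ι q n₀ * ι q n₁ := by
  rw [ι_mul_ι_comm, polar_comm, hpolar, map_neg, map_ofNat]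

variable (hn₁ : q n₁ = 0)
include hn₁

theorem ι_mul_one_add_ι_mul_ι_of_null :
    ι q n₁ * (1 + ι q n₀ * ι q n₁) = -ι q n₁ := by
  rw [mul_add, mul_one, ← mul_assoc, ι_mul_ι_swap_of_polar_eq_neg_two hpolar, sub_mul, mul_assoc,
    ι_sq_scalar, hn₁, map_zero]
  noncomm_ring

theorem one_add_ι_mul_ι_mul_self_of_null :
    (1 + ι q n₀ * ι q n₁) * (1 + ι q n₀ * ι q n₁) = 1 := by
  have h := ι_mul_one_add_ι_mul_ι_of_null hpolar hn₁
  calc (1 + ι q n₀ * ι q n₁) * (1 + ι q n₀ * ι q n₁)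
      = 1 + ι q n₀ * ι q n₁ + ι q n₀ * (ι q n₁ * (1 + ι q n₀ * ι q n₁)) := by noncomm_ring
    _ = 1 := by rw [h]; noncomm_ring

end NullPair

theorem Q_apply (v : Fin 5 → ℝ) :
    Q v = v 1 ^ 2 + v 2 ^ 2 + v 3 ^ 2 - 2 * v 0 * v 4 := by
  rw [show Q = Bmat.toQuadraticForm' from rfl]
  simp [Matrix.toQuadraticForm', LinearMap.BilinMap.toQuadraticMap_apply,
    Matrix.toLinearMap₂'_apply, Fin.sum_univ_five, Bmat]
  ring

theorem polar_Q_apply (u v : Fin 5 → ℝ) :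
    polar Q u v = 2 * (u 1 * v 1 + u 2 * v 2 + u 3 * v 3) - 2 * (u 0 * v 4 + u 4 * v 0) := by
  simp only [polar, Q_apply, Pi.add_apply]
  ring

theorem isOrtho_Q_iff {u v : Fin 5 → ℝ} :
    Q.IsOrtho u v ↔ u 1 * v 1 + u 2 * v 2 + u 3 * v 3 - (u 0 * v 4 + u 4 * v 0) = 0 := by
  rw [← isOrtho_polarBilin, polarBilin_apply_apply, polar_Q_apply]
  constructor <;> intro h <;> linarith

theorem sharpV_eq_self {x : Fin 5 → ℝ} (hx0 : x 0 = 0) (hx4 : x 4 = 0) :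
    sharpV x = x := by
  funext i
  by_cases h0 : i = 0 <;> by_cases h4 : i = 4 <;> simp [sharpV, h0, h4, hx0, hx4]

theorem sharpV_e_zero : sharpV (e 0) = -e 4 := by
  funext i; fin_cases i <;> simp [sharpV, e]

theorem sharpV_e {i : Fin 5} (h0 : i ≠ 0) (h4 : i ≠ 4) : sharpV (e i) = e i :=
  sharpV_eq_self (by simp [e, h0.symm]) (by simp [e, h4.symm])

theorem wedgeVec_eq_mul {A : CliffordAlgebra Q} {v : Fin 5 → ℝ}
    (h : ι Q v * involute A = A * ι Q v) : wedgeVec A v = A * ι Q v := by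
  rw [wedgeVec, h, ← two_smul ℝ, smul_smul]
  norm_num

theorem wedgeVec_ι (u v : Fin 5 → ℝ) :
    wedgeVec (ι Q u) v = ι Q u * ι Q v - algebraMap ℝ _ (polar Q u v / 2) := by
  rw [wedgeVec, involute_ι, mul_neg, ← sub_eq_add_neg, ι_mul_ι_comm v u, polar_comm,
    Algebra.algebraMap_eq_smul_one, Algebra.algebraMap_eq_smul_one]
  module

theorem ι_mul_involute_IE {u : Fin 5 → ℝ} (hu1 : u 1 = 0) (hu2 : u 2 = 0) (hu3 : u 3 = 0) :
    ι Q u * involute IE = IE * ι Q u := by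
  refine ι_mul_involute_mul_ι (ι_mul_involute_mul_ι (ι_mul_involute_ι ?_) ?_) ?_ <;>
    simp [isOrtho_Q_iff, e, hu1, hu2, hu3]

theorem involute_IE : involute IE = -IE := by
  simp [IE]

theorem ι_mul_IE {u : Fin 5 → ℝ} (hu1 : u 1 = 0) (hu2 : u 2 = 0) (hu3 : u 3 = 0) :
    ι Q u * IE = -(IE * ι Q u) := by
  rw [← ι_mul_involute_IE hu1 hu2 hu3, involute_IE, mul_neg, neg_neg]

theorem ι_e_zero_mul_IE : ι Q (e 0) * IE = -(IE * ι Q (e 0)) :=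
  ι_mul_IE (by simp [e]) (by simp [e]) (by simp [e])

theorem ι_e_four_mul_IE : ι Q (e 4) * IE = -(IE * ι Q (e 4)) :=
  ι_mul_IE (by simp [e]) (by simp [e]) (by simp [e])

theorem isOrtho_e_iff {i j : Fin 5} : Q.IsOrtho (e i) (e j) ↔ Bmat i j = 0 := by
  rw [isOrtho_Q_iff]
  fin_cases i <;> fin_cases j <;> simp [e, Bmat]

theorem Q_e_four : Q (e 4) = 0 := by
  simp [Q_apply, e]

theorem polar_e_zero_e_four : polar Q (e 0) (e 4) = -2 := by
  simp [polar_Q_apply, e]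

theorem map_IE (F : CliffordAlgebra Q →ₐ[ℝ] CliffordAlgebra Q)
    (hF : ∀ v : Fin 5 → ℝ, F (ι Q v) = ι Q (sharpV v)) : F IE = IE := by
  simp [IE, hF, sharpV_e]

theorem map_Ppt (F : CliffordAlgebra Q →ₐ[ℝ] CliffordAlgebra Q)
    (hF : ∀ v : Fin 5 → ℝ, F (ι Q v) = ι Q (sharpV v)) {x : Fin 5 → ℝ} (hx0 : x 0 = 0)
    (hx4 : x 4 = 0) : F (Ppt x) = IE + ι Q x * IE * ι Q (e 4) := by
  rw [Ppt, dualE, map_add, map_mul, map_neg, map_mul, map_IE F hF, hF, hF,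
    sharpV_eq_self hx0 hx4, sharpV_e_zero, map_neg, neg_mul_neg]

theorem wedgeVec_ι_vpt_e_four {x : Fin 5 → ℝ} (hx0 : x 0 = 0) (hx4 : x 4 = 0) :
    wedgeVec (ι Q (vpt x)) (e 4) = 1 + ι Q (e 0) * ι Q (e 4) + ι Q x * ι Q (e 4) := by
  have hpolar : polar Q (vpt x) (e 4) = -2 := by
    rw [polar_Q_apply]
    simp [vpt, e, hx0, hx4]
  rw [wedgeVec_ι, hpolar, vpt, map_add, map_add, map_smul, add_mul, add_mul, smul_mul_assoc,
    ι_sq_scalar, Q_e_four, map_zero, smul_zero, add_zero]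
  norm_num
  abel

theorem commute_ι_e_zero_mul_ι_e_four_IE : Commute (ι Q (e 0) * ι Q (e 4)) IE := by
  rw [Commute, SemiconjBy, mul_assoc, ι_e_four_mul_IE, mul_neg, ← mul_assoc, ι_e_zero_mul_IE,
    neg_mul, neg_neg, mul_assoc]

theorem neg_Ic : -Ic = IE * (1 + ι Q (e 0) * ι Q (e 4)) := by
  have hblade : wedgeVec (wedgeVec (wedgeVec (ι Q (e 0)) (e 1)) (e 2)) (e 3) = ι Q (e 0) * IE := by
    rw [wedgeVec_eq_mul (ι_mul_involute_ι (isOrtho_e_iff.mpr rfl)),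
      wedgeVec_eq_mul (ι_mul_involute_mul_ι (ι_mul_involute_ι (isOrtho_e_iff.mpr rfl))
        (isOrtho_e_iff.mpr rfl)),
      wedgeVec_eq_mul (ι_mul_involute_mul_ι (ι_mul_involute_mul_ι
        (ι_mul_involute_ι (isOrtho_e_iff.mpr rfl)) (isOrtho_e_iff.mpr rfl))
        (isOrtho_e_iff.mpr rfl)), IE]
    simp only [mul_assoc]
  calc -Ic = -((1 / 2 : ℝ) • (ι Q (e 0) * IE * ι Q (e 4) + ι Q (e 4) * (ι Q (e 0) * IE))) := by
        rw [Ic, hblade, wedgeVec, map_mul, involute_ι, involute_IE, neg_mul_neg]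
    _ = -((1 / 2 : ℝ) • (-(IE * ι Q (e 0)) * ι Q (e 4) + (-2 - ι Q (e 0) * ι Q (e 4)) * IE)) := by
        rw [← mul_assoc (ι Q (e 4)), ι_mul_ι_swap_of_polar_eq_neg_two polar_e_zero_e_four,
          ι_e_zero_mul_IE]
    _ = IE * (1 + ι Q (e 0) * ι Q (e 4)) := by
        rw [sub_mul, commute_ι_e_zero_mul_ι_e_four_IE.eq, neg_mul, mul_assoc IE, neg_mul, two_mul,
          mul_add, mul_one]
        module

/-- (Point correspondence.) For every `x ∈ span{e₁,e₂,e₃}`,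
`♯(P(x)) = (ι(v_x) ∧ e∞) I_c⁻¹`, the CGA dual (IPNS) representation of the flat point. -/
theorem sharp_point_correspondence (F : CliffordAlgebra Q →ₐ[ℝ] CliffordAlgebra Q)
    (hF : ∀ v : Fin 5 → ℝ, F (ι Q v) = ι Q (sharpV v)) :
    ∀ x : Fin 5 → ℝ, x 0 = 0 → x 4 = 0 →
      F (Ppt x) = wedgeVec (ι Q (vpt x)) (e 4) * (-Ic) := by
  intro x hx0 hx4
  rw [map_Ppt F hF hx0 hx4, wedgeVec_ι_vpt_e_four hx0 hx4, neg_Ic]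
  set N := 1 + ι Q (e 0) * ι Q (e 4)
  have hNN : N * N = 1 := one_add_ι_mul_ι_mul_self_of_null polar_e_zero_e_four Q_e_four
  have h4N : ι Q (e 4) * N = -ι Q (e 4) :=
    ι_mul_one_add_ι_mul_ι_of_null polar_e_zero_e_four Q_e_four
  have hNIE : N * IE = IE * N :=
    ((Commute.one_left IE).add_left commute_ι_e_zero_mul_ι_e_four_IE).eq
  symm
  calc (N + ι Q x * ι Q (e 4)) * (IE * N) = N * IE * N + ι Q x * (ι Q (e 4) * IE) * N := by
        noncomm_ring
    _ = IE * (N * N) - ι Q x * IE * (ι Q (e 4) * N) := by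
        rw [hNIE, ι_e_four_mul_IE]
        noncomm_ring
    _ = IE + ι Q x * IE * ι Q (e 4) := by
        rw [hNN, h4N]
        noncomm_ring
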